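/- Let (x, y) be a feasible solution of the offline sampling model in which some flow f is assigned to at least two switches, and suppose a · y f < b · C. Then removing f's assignment from one of those switches yields another feasible solution with strictly larger objective value. Consequently, in any optimal solution, every flow f with a · y f < b · C is assigned to exactly one switch. -/

import Mathlib

/-! Dropping the assignment of `f` to `s₂` keeps `f` served by `s₁`, can only lighten the
load of `s₂`, and raises the objective by exactly `b * C - a * y f > 0`. -/

namespace OfflineSampling

variable {S F : Type}

def unassign [DecidableEq F] [DecidableEq S] (x : F → S → Bool) (f : F) (s₀ : S) :
    F → S → Bool :=
  fun g s => x g s && !decide ((g, s) = (f, s₀))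

def objective [Fintype S] [Fintype F] (a b C : ℝ) (x : F → S → Bool) (y : F → ℝ) : ℝ :=
  ∑ s, ∑ g, (a * (if x g s then y g else 0) - b * C * (if x g s then 1 else 0))

section

variable [DecidableEq F] [DecidableEq S] {x : F → S → Bool} {f g : F} {s₀ s : S}

theorem unassign_eq_true_iff :
    unassign x f s₀ g s = true ↔ x g s = true ∧ (g, s) ≠ (f, s₀) := by
  simp only [unassign, Bool.and_eq_true, Bool.not_eq_true', decide_eq_false_iff_not]

theorem eq_true_of_unassign_eq_true (h : unassign x f s₀ g s = true) : x g s = true :=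
  (unassign_eq_true_iff.mp h).1

theorem unassign_covers {s₁ : S} (hsat : ∀ g, ∃ s, x g s = true) (h₁ : x f s₁ = true)
    (hne : s₁ ≠ s₀) (g : F) : ∃ s, unassign x f s₀ g s = true := by
  by_cases hg : g = f
  · subst hg
    exact ⟨s₁, unassign_eq_true_iff.mpr ⟨h₁, by simp [hne]⟩⟩
  · obtain ⟨s, hs⟩ := hsat g
    exact ⟨s, unassign_eq_true_iff.mpr ⟨hs, by simp [hg]⟩⟩

theorem sum_filter_unassign_le [Fintype F] (y : F → ℝ) (hyf : 0 ≤ y f) (s : S) :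
    ∑ g ∈ Finset.univ.filter (fun g => unassign x f s₀ g s = true), y g
      ≤ ∑ g ∈ Finset.univ.filter (fun g => x g s = true), y g := by
  refine Finset.sum_le_sum_of_subset_of_nonneg
    (Finset.monotone_filter_right _ fun _ _ => eq_true_of_unassign_eq_true) fun g _ hg => ?_
  have : g = f := by
    by_contra hgf
    simp_all [unassign_eq_true_iff]
  exact this ▸ hyf

theorem objective_unassign [Fintype S] [Fintype F] (a b C : ℝ) (y : F → ℝ)
    (h : x f s₀ = true) :
    objective a b C (unassign x f s₀) y = objective a b C x y - (a * y f - b * C) := by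
  have cell : ∀ g s,
      a * (if unassign x f s₀ g s then y g else 0) - b * C * (if unassign x f s₀ g s then 1 else 0)
        = (a * (if x g s then y g else 0) - b * C * (if x g s then 1 else 0))
          - if s = s₀ ∧ g = f then a * y f - b * C else 0 := by
    intro g s
    by_cases hgs : s = s₀ ∧ g = f
    · obtain ⟨rfl, rfl⟩ := hgs
      simp [unassign, h]
    · have : (g, s) ≠ (f, s₀) := by grind
      simp [unassign, this, hgs]
  simp only [objective, cell, Finset.sum_sub_distrib, ite_and]
  simp

end

end OfflineSampling

open OfflineSampling

theorem offline_remove_redundant_assignment_general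
    {S F : Type} [Fintype S] [Fintype F]
    (c : S → ℝ) (r : F → ℝ) (hr : ∀ f, 0 < r f)
    (t : F → S → Prop)
    (a b C : ℝ)
    (x : F → S → Bool) (y : F → ℝ)
    (hy : ∀ g, r g ≤ y g)
    (hsat : ∀ g, ∃ s, x g s = true)
    (hpath : ∀ g s, x g s = true → t g s)
    (hcap : ∀ s, ∑ g ∈ Finset.univ.filter (fun g => x g s = true), y g ≤ c s)
    (f : F) (s₁ s₂ : S) (hne : s₁ ≠ s₂)
    (h₁ : x f s₁ = true) (h₂ : x f s₂ = true)
    (hlt : a * y f < b * C) :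
    (∃ x' : F → S → Bool,
      (∀ g, ∃ s, x' g s = true) ∧
      (∀ g s, x' g s = true → t g s) ∧
      (∀ s, ∑ g ∈ Finset.univ.filter (fun g => x' g s = true), y g ≤ c s) ∧
      ∑ s, ∑ g, (a * (if x g s then y g else 0) - b * C * (if x g s then 1 else 0))
        < ∑ s, ∑ g, (a * (if x' g s then y g else 0) - b * C * (if x' g s then 1 else 0))) ∧
    ¬ (∀ (x' : F → S → Bool) (y' : F → ℝ),
        (∀ g, r g ≤ y' g) →
        (∀ g, ∃ s, x' g s = true) →
        (∀ g s, x' g s = true → t g s) →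
        (∀ s, ∑ g ∈ Finset.univ.filter (fun g => x' g s = true), y' g ≤ c s) →
        ∑ s, ∑ g, (a * (if x' g s then y' g else 0) - b * C * (if x' g s then 1 else 0))
          ≤ ∑ s, ∑ g, (a * (if x g s then y g else 0) - b * C * (if x g s then 1 else 0))) := by
  classical
  have hyf : 0 ≤ y f := (hr f).le.trans (hy f)
  have hcov := unassign_covers hsat h₁ hne
  have hpath' : ∀ g s, unassign x f s₂ g s = true → t g s :=
    fun g s h => hpath g s (eq_true_of_unassign_eq_true h)
  have hcap' : ∀ s, ∑ g ∈ Finset.univ.filter (fun g => unassign x f s₂ g s = true), y g ≤ c s :=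
    fun s => (sum_filter_unassign_le y hyf s).trans (hcap s)
  have improved : objective a b C x y < objective a b C (unassign x f s₂) y := by
    rw [objective_unassign a b C y h₂]
    linarith
  exact ⟨⟨_, hcov, hpath', hcap', improved⟩,
    fun hopt => (hopt _ y hy hcov hpath' hcap').not_gt improved⟩

/-- If a flow f is assigned to two distinct switches and a·y f < b·C, then removing one
of its assignments gives a feasible solution with strictly larger objective; consequently
the given solution is not optimal. -/
theorem offline_remove_redundant_assignment
    {S F : Type} [Fintype S] [Fintype F]
    (c : S → ℝ) (r : F → ℝ) (hr : ∀ f, 0 < r f)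
    (t : F → S → Prop)
    (a b C : ℝ) (ha : 0 ≤ a) (hb : 0 ≤ b) (hC : 0 ≤ C)
    (x : F → S → Bool) (y : F → ℝ)
    (hy : ∀ g, r g ≤ y g)
    (hsat : ∀ g, ∃ s, x g s = true)
    (hpath : ∀ g s, x g s = true → t g s)
    (hcap : ∀ s, ∑ g ∈ Finset.univ.filter (fun g => x g s = true), y g ≤ c s)
    (f : F) (s₁ s₂ : S) (hne : s₁ ≠ s₂)
    (h₁ : x f s₁ = true) (h₂ : x f s₂ = true)
    (hlt : a * y f < b * C) :
    (∃ x' : F → S → Bool,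
      (∀ g, ∃ s, x' g s = true) ∧
      (∀ g s, x' g s = true → t g s) ∧
      (∀ s, ∑ g ∈ Finset.univ.filter (fun g => x' g s = true), y g ≤ c s) ∧
      ∑ s, ∑ g, (a * (if x g s then y g else 0) - b * C * (if x g s then 1 else 0))
        < ∑ s, ∑ g, (a * (if x' g s then y g else 0) - b * C * (if x' g s then 1 else 0))) ∧
    ¬ (∀ (x' : F → S → Bool) (y' : F → ℝ),
        (∀ g, r g ≤ y' g) →
        (∀ g, ∃ s, x' g s = true) →
        (∀ g s, x' g s = true → t g s) →
        (∀ s, ∑ g ∈ Finset.univ.filter (fun g => x' g s = true), y' g ≤ c s) →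
        ∑ s, ∑ g, (a * (if x' g s then y' g else 0) - b * C * (if x' g s then 1 else 0))
          ≤ ∑ s, ∑ g, (a * (if x g s then y g else 0) - b * C * (if x g s then 1 else 0))) :=
  offline_remove_redundant_assignment_general c r hr t a b C x y hy hsat hpath hcap f s₁ s₂ hne h₁
    h₂ hlt
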